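/- Let ρ = |0⟩⟨0|_A ⊗ (1/2^b) I_B be a state on a+b qubits, where register A has a qubits and B has b qubits. For any unitary U on all n = a+b qubits and any partition of the n qubits into registers C (with c qubits) and D (with d qubits), the (0,0) diagonal entry of the reduced state tr_C(U ρ U†) is at most 2^c / 2^b = 2^{a-d}. -/

import Mathlib

open Matrix BigOperators Kronecker
open scoped Classical ComplexOrder

noncomputable section

def ptraceFst {C D : Type*} [Fintype C] (σ : Matrix (C × D) (C × D) ℂ) :
    Matrix D D ℂ := Matrix.of fun y y' => ∑ j : C, σ (j, y) (j, y')

def ptraceSnd {C D : Type*} [Fintype D] (σ : Matrix (C × D) (C × D) ℂ) :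
    Matrix C C ℂ := Matrix.of fun x x' => ∑ j : D, σ (x, j) (x', j)

/-- The square root of a positive semidefinite matrix, as `Matrix.PosSemidef.sqrt` was defined
in Mathlib (December 2024). -/
def posSemidefSqrt {n : Type*} [Fintype n] [DecidableEq n] {A : Matrix n n ℂ}
    (hA : A.PosSemidef) : Matrix n n ℂ :=
  (hA.1.eigenvectorUnitary : Matrix n n ℂ) *
    diagonal (fun i => ((Real.sqrt (hA.1.eigenvalues i) : ℝ) : ℂ)) *
    (star hA.1.eigenvectorUnitary : Matrix n n ℂ)

def traceNorm {n : Type*} [Fintype n] [DecidableEq n] (M : Matrix n n ℂ) : ℝ :=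
  (posSemidefSqrt (Matrix.posSemidef_conjTranspose_mul_self M)).trace.re

def traceDist {n : Type*} [Fintype n] [DecidableEq n] (σ σ' : Matrix n n ℂ) : ℝ :=
  traceNorm (σ - σ') / 2

def IsDensity {n : Type*} [Fintype n] (M : Matrix n n ℂ) : Prop :=
  M.PosSemidef ∧ M.trace = 1

def IsPure {n : Type*} [Fintype n] (σ : Matrix n n ℂ) : Prop :=
  ∃ ψ : n → ℂ, (∑ i, Complex.normSq (ψ i)) = 1 ∧ σ = Matrix.vecMulVec ψ (star ψ)

def inputState (a b : ℕ) :
    Matrix (Fin (2^a) × Fin (2^b)) (Fin (2^a) × Fin (2^b)) ℂ :=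
  (Matrix.single 0 0 1) ⊗ₖ (((2:ℂ)^b)⁻¹ • (1 : Matrix (Fin (2^b)) (Fin (2^b)) ℂ))

def measSub {C D : Type*} [Fintype C] [Fintype D] (σ : Matrix (C × D) (C × D) ℂ) (j : C) :
    Matrix D D ℂ := Matrix.of fun y y' => σ (j, y) (j, y')

def measProb {C D : Type*} [Fintype C] [Fintype D] (σ : Matrix (C × D) (C × D) ℂ) (j : C) : ℝ :=
  ((measSub σ j).trace).re

def gibbs {n : Type*} [Fintype n] [DecidableEq n] (β : ℝ) {H : Matrix n n ℂ}
    (hH : H.IsHermitian) : Matrix n n ℂ :=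
  ((hH.cfc (fun x => Real.exp (-β * x))).trace)⁻¹ • hH.cfc (fun x => Real.exp (-β * x))

def vNEntropy {n : Type*} [Fintype n] [DecidableEq n] (M : Matrix n n ℂ) : ℝ :=
  if h : M.IsHermitian then -∑ i, (h.eigenvalues i) * Real.logb 2 (h.eigenvalues i) else 0

def iterState (n : ℕ) (U : ℕ → Matrix (Fin 2 × Fin (2^n)) (Fin 2 × Fin (2^n)) ℂ) :
    ℕ → Matrix (Fin (2^n)) (Fin (2^n)) ℂ
  | 0 => ((2:ℂ)^n)⁻¹ • 1
  | k+1 => ptraceFst (U k * ((Matrix.single 0 0 1) ⊗ₖ iterState n U k) * (U k)ᴴ)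

/-! `inputState a b ≤ 2⁻ᵇ • 1` in the Loewner order, and this bound survives reindexing and
unitary conjugation. So every diagonal entry of `U ρ Uᴴ` is at most `2⁻ᵇ`, and the `(0,0)` entry
of the partial trace over `C` is a sum of `2^c` of them. -/

open scoped MatrixOrder

namespace Matrix

variable {𝕜 : Type*} [RCLike 𝕜] {m n : Type*}

lemma single_le_one [DecidableEq n] (i : n) : single i i (1 : 𝕜) ≤ 1 := by
  rw [le_iff, ← diagonal_single, ← diagonal_one, diagonal_sub, posSemidef_diagonal_iff]
  intro j
  by_cases h : j = i <;> simp [h]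

lemma kronecker_le_kronecker_right [Fintype m] [Fintype n] {A B : Matrix m m 𝕜} (hAB : A ≤ B)
    {C : Matrix n n 𝕜} (hC : 0 ≤ C) : A ⊗ₖ C ≤ B ⊗ₖ C := by
  rw [le_iff, ← sub_add_cancel B A, add_kronecker, add_sub_cancel_right]
  exact (le_iff.mp hAB).kronecker hC.posSemidef

lemma reindex_le_reindex (e : m ≃ n) {A B : Matrix m m 𝕜} (hAB : A ≤ B) :
    reindex e e A ≤ reindex e e B :=
  (le_iff.mp hAB).submatrix e.symm

lemma apply_le_apply_of_le {A B : Matrix n n 𝕜} (hAB : A ≤ B) (i : n) : A i i ≤ B i i :=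
  sub_nonneg.mp (le_iff.mp hAB).diag_nonneg

lemma unitary_conj_le_smul_one [Fintype n] [DecidableEq n] {U A : Matrix n n 𝕜}
    (hU : U ∈ unitaryGroup n 𝕜) {r : 𝕜} (hA : A ≤ r • 1) : U * A * Uᴴ ≤ r • 1 := by
  have hUU : U * star U = 1 := mem_unitaryGroup_iff.mp hU
  rw [← star_eq_conjTranspose]
  simpa [hUU] using star_right_conjugate_le_conjugate hA U

end Matrix

lemma ptraceFst_apply_le {C D : Type*} [Fintype C] [DecidableEq C] [DecidableEq D]
    {σ : Matrix (C × D) (C × D) ℂ} {r : ℂ} (hσ : σ ≤ r • 1) (y : D) :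
    ptraceFst σ y y ≤ Fintype.card C * r :=
  calc ptraceFst σ y y = ∑ j : C, σ (j, y) (j, y) := rfl
    _ ≤ ∑ _j : C, r := Finset.sum_le_sum fun j _ => by simpa using apply_le_apply_of_le hσ (j, y)
    _ = Fintype.card C * r := by simp

lemma inputState_le (a b : ℕ) : inputState a b ≤ ((2:ℂ)^b)⁻¹ • 1 :=
  calc inputState a b ≤ 1 ⊗ₖ (((2:ℂ)^b)⁻¹ • 1) :=
        kronecker_le_kronecker_right (single_le_one 0) (by positivity)
    _ = ((2:ℂ)^b)⁻¹ • 1 := by rw [kronecker_smul, one_kronecker_one]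

theorem stmt1_general (a b c d : ℕ)
    (e : (Fin (2^a) × Fin (2^b)) ≃ (Fin (2^c) × Fin (2^d)))
    (U : Matrix (Fin (2^c) × Fin (2^d)) (Fin (2^c) × Fin (2^d)) ℂ)
    (hU : U ∈ Matrix.unitaryGroup (Fin (2^c) × Fin (2^d)) ℂ) :
    ((ptraceFst (U * (Matrix.reindex e e (inputState a b)) * Uᴴ)) 0 0).re
      ≤ (2:ℝ)^c / 2^b := by
  have hρ : reindex e e (inputState a b) ≤ ((2:ℂ)^b)⁻¹ • 1 := by
    simpa [submatrix_smul, submatrix_one_equiv] using reindex_le_reindex e (inputState_le a b)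
  have h := ptraceFst_apply_le (unitary_conj_le_smul_one hU hρ) 0
  have hbound : (Fintype.card (Fin (2^c)) : ℂ) * ((2:ℂ)^b)⁻¹ = (((2:ℝ)^c / 2^b : ℝ) : ℂ) := by
    rw [Fintype.card_fin]; push_cast; ring
  rw [hbound] at h
  exact (Complex.le_def.mp h).1

theorem stmt1 (a b c d : ℕ) (hn : a + b = c + d)
    (e : (Fin (2^a) × Fin (2^b)) ≃ (Fin (2^c) × Fin (2^d)))
    (U : Matrix (Fin (2^c) × Fin (2^d)) (Fin (2^c) × Fin (2^d)) ℂ)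
    (hU : U ∈ Matrix.unitaryGroup (Fin (2^c) × Fin (2^d)) ℂ) :
    ((ptraceFst (U * (Matrix.reindex e e (inputState a b)) * Uᴴ)) 0 0).re
      ≤ (2:ℝ)^c / 2^b :=
  stmt1_general a b c d e U hU

end
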